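/- arXiv:1601.02981 — 4 statements merged into one kernel-verified Lean document; each statement's English description precedes it below -/
import Mathlib

section
/- Let V be a nonzero finite-dimensional real inner product space, and let I, J be complex structures on V compatible with the inner product such that I ∘ J + J ∘ I = 2p·id for some real number p. Then the commutator [I,J] = I∘J − J∘I is bijective if and only if |p| < 1, and in that case its inverse is (1/(4(p² − 1)))·[I,J]. -/
open scoped InnerProductSpace

set_option maxHeartbeats 1000000 in
/-- For compatible complex structures `I`, `J` on a nonzero
finite-dimensional real inner product space with `I∘J + J∘I = 2p·id`, the
commutator `[I,J]` is bijective iff `|p| < 1`, with inverse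
`(1/(4(p² - 1)))·[I,J]` in that case. -/
theorem stmt_3 {V : Type*} [NormedAddCommGroup V] [InnerProductSpace ℝ V]
    [FiniteDimensional ℝ V] [Nontrivial V]
    (I J : V →ₗ[ℝ] V) (p : ℝ)
    (hI2 : I ∘ₗ I = -1) (hJ2 : J ∘ₗ J = -1)
    (hIc : ∀ x y : V, ⟪I x, I y⟫_ℝ = ⟪x, y⟫_ℝ)
    (hJc : ∀ x y : V, ⟪J x, J y⟫_ℝ = ⟪x, y⟫_ℝ)
    (hanti : I ∘ₗ J + J ∘ₗ I = (2 * p) • (1 : V →ₗ[ℝ] V)) :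
    (Function.Bijective (I ∘ₗ J - J ∘ₗ I) ↔ |p| < 1) ∧
      (|p| < 1 →
        ((1 / (4 * (p ^ 2 - 1))) • (I ∘ₗ J - J ∘ₗ I)) ∘ₗ (I ∘ₗ J - J ∘ₗ I) = 1 ∧
        (I ∘ₗ J - J ∘ₗ I) ∘ₗ ((1 / (4 * (p ^ 2 - 1))) • (I ∘ₗ J - J ∘ₗ I)) = 1) := by
  have h1 : I * I = -1 := hI2
  have h2 : J * J = -1 := hJ2
  have h3 : I * J + J * I = (2*p) • (1 : V →ₗ[ℝ] V) := hanti
  have hJI : J * I = (2*p) • (1 : V →ₗ[ℝ] V) - I * J := by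
    rw [eq_sub_iff_add_eq, add_comm]; exact h3
  have hA : (I*J)*(I*J) = (2*p) • (I*J) - 1 := by
    calc (I*J)*(I*J) = I*((J*I)*J) := by noncomm_ring
    _ = I*(((2*p) • (1 : V →ₗ[ℝ] V) - I*J)*J) := by rw [hJI]
    _ = (2*p) • (I*J) - (I*I)*(J*J) := by
        simp [sub_mul, mul_sub, smul_mul_assoc, mul_smul_comm]; noncomm_ring
    _ = (2*p) • (I*J) - 1 := by rw [h1, h2]; simp
  have key : (I ∘ₗ J - J ∘ₗ I) * (I ∘ₗ J - J ∘ₗ I) = (4*(p^2-1)) • (1 : V →ₗ[ℝ] V) := by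
    have : (I ∘ₗ J - J ∘ₗ I : V →ₗ[ℝ] V) = (2:ℝ) • (I*J) - (2*p) • 1 := by
      show I*J - J*I = _
      rw [hJI]; module
    rw [this]
    have expand : ((2:ℝ) • (I*J) - (2*p) • (1 : V →ₗ[ℝ] V)) * ((2:ℝ) • (I*J) - (2*p) • 1)
        = (4:ℝ) • ((I*J)*(I*J)) - (8*p) • (I*J) + (4*p^2) • 1 := by
      simp [sub_mul, mul_sub, smul_mul_assoc, mul_smul_comm, smul_smul]
      module
    rw [expand, hA]
    module
  -- skew-adjointness
  have hIsq : ∀ b : V, I (I b) = -b := by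
    intro b; have := congrArg (fun f => f b) hI2; simpa using this
  have hJsq : ∀ b : V, J (J b) = -b := by
    intro b; have := congrArg (fun f => f b) hJ2; simpa using this
  have skewI : ∀ a b : V, ⟪I a, b⟫_ℝ = -⟪a, I b⟫_ℝ := by
    intro a b
    have : ⟪I a, I (I b)⟫_ℝ = ⟪a, I b⟫_ℝ := hIc a (I b)
    rw [hIsq b] at this
    rw [inner_neg_right] at this; linarith
  have skewJ : ∀ a b : V, ⟪J a, b⟫_ℝ = -⟪a, J b⟫_ℝ := by
    intro a b
    have : ⟪J a, J (J b)⟫_ℝ = ⟪a, J b⟫_ℝ := hJc a (J b)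
    rw [hJsq b] at this
    rw [inner_neg_right] at this; linarith
  -- |p| ≤ 1
  have habs : |p| ≤ 1 := by
    obtain ⟨x, hx⟩ := exists_ne (0 : V)
    have hxn : (0:ℝ) < ‖x‖^2 := by have := norm_pos_iff.mpr hx; positivity
    have happ : I (J x) + J (I x) = (2*p) • x := by
      have := congrArg (fun f => f x) hanti; simpa using this
    have hinner : ⟪I (J x) + J (I x), x⟫_ℝ = 2*p * ‖x‖^2 := by
      rw [happ, real_inner_smul_left, real_inner_self_eq_norm_sq]
    have h4 : ⟪I (J x), x⟫_ℝ + ⟪J (I x), x⟫_ℝ = 2*p*‖x‖^2 := by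
      rw [← inner_add_left]; exact hinner
    rw [skewI (J x) x, skewJ (I x) x] at h4
    have h5 : p * ‖x‖^2 = -⟪J x, I x⟫_ℝ := by
      have hsym : ⟪I x, J x⟫_ℝ = ⟪J x, I x⟫_ℝ := real_inner_comm _ _
      nlinarith [h4, hsym]
    have hnI : ‖I x‖ = ‖x‖ := by
      have := hIc x x
      rw [real_inner_self_eq_norm_sq, real_inner_self_eq_norm_sq] at this
      nlinarith [norm_nonneg (I x), norm_nonneg x]
    have hnJ : ‖J x‖ = ‖x‖ := by
      have := hJc x x
      rw [real_inner_self_eq_norm_sq, real_inner_self_eq_norm_sq] at this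
      nlinarith [norm_nonneg (J x), norm_nonneg x]
    have hcs : |⟪J x, I x⟫_ℝ| ≤ ‖x‖^2 := by
      calc |⟪J x, I x⟫_ℝ| ≤ ‖J x‖ * ‖I x‖ := abs_real_inner_le_norm _ _
      _ = ‖x‖^2 := by rw [hnI, hnJ]; ring
    have : |p| * ‖x‖^2 ≤ ‖x‖^2 := by
      calc |p| * ‖x‖^2 = |p * ‖x‖^2| := by rw [abs_mul, abs_of_pos hxn]
      _ = |⟪J x, I x⟫_ℝ| := by rw [h5, abs_neg]
      _ ≤ ‖x‖^2 := hcs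
    nlinarith
  set T : V →ₗ[ℝ] V := I ∘ₗ J - J ∘ₗ I with hT
  constructor
  · constructor
    · intro hbij
      rcases lt_or_eq_of_le habs with h | h
      · exact h
      · exfalso
        have hp2 : p^2 = 1 := by
          have := sq_abs p; rw [h] at this; linarith
        have hzero : T * T = 0 := by rw [key, hp2]; simp
        obtain ⟨x, hx⟩ := exists_ne (0 : V)
        have hTT : T (T x) = 0 := by
          have := LinearMap.ext_iff.mp hzero x
          rwa [Module.End.mul_apply, LinearMap.zero_apply] at this
        have hx1 : T x = 0 := hbij.injective (by rw [hTT, map_zero])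
        have hx0 : x = 0 := hbij.injective (by rw [hx1, map_zero])
        exact hx hx0
    · intro hp
      have hc : (4*(p^2-1)) ≠ 0 := by
        have : p^2 < 1 := by nlinarith [sq_abs p, abs_nonneg p]
        nlinarith
      have hinv : T ∘ₗ ((1 / (4 * (p ^ 2 - 1))) • T) = 1 := by
        show T * ((1 / (4 * (p ^ 2 - 1))) • T) = 1
        rw [mul_smul_comm, key]
        rw [smul_smul, one_div, inv_mul_cancel₀ hc, one_smul]
      have hinv' : ((1 / (4 * (p ^ 2 - 1))) • T) ∘ₗ T = 1 := by
        show ((1 / (4 * (p ^ 2 - 1))) • T) * T = 1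
        rw [smul_mul_assoc, key, smul_smul, one_div, inv_mul_cancel₀ hc, one_smul]
      refine ⟨fun a b hab => ?_, fun y => ⟨((1 / (4 * (p ^ 2 - 1))) • T) y, ?_⟩⟩
      · have ha := LinearMap.ext_iff.mp hinv' a
        have hb := LinearMap.ext_iff.mp hinv' b
        rw [LinearMap.comp_apply, Module.End.one_apply] at ha hb
        rw [← ha, ← hb, hab]
      · have := LinearMap.ext_iff.mp hinv y
        rwa [LinearMap.comp_apply, Module.End.one_apply] at this
  · intro hp
    have hc : (4*(p^2-1)) ≠ 0 := by
      have : p^2 < 1 := by nlinarith [sq_abs p, abs_nonneg p]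
      nlinarith
    constructor
    · show ((1 / (4 * (p ^ 2 - 1))) • T) * T = 1
      rw [smul_mul_assoc, key, smul_smul, one_div, inv_mul_cancel₀ hc, one_smul]
    · show T * ((1 / (4 * (p ^ 2 - 1))) • T) = 1
      rw [mul_smul_comm, key, smul_smul, one_div, inv_mul_cancel₀ hc, one_smul]
end

section
/- Let V be a finite-dimensional real inner product space and let I, J be complex structures on V compatible with the inner product with I ∘ J + J ∘ I = 2p·id for a real number p with |p| < 1. Let ξ be a linear functional on V and define the linear functional θ := (1/(2(p² − 1)))·(ξ ∘ [I,J]). Then, with respect to the inner product induced on the dual space V*, one has ⟨ξ, θ⟩ = 0 and ‖θ‖² = ‖ξ‖²/(1 − p²). -/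
/-!
The commutator `A = [I, J]` of two skew-adjoint operators is skew-adjoint, and squaring the
anticommutation relation gives `A² = 4(p² - 1)·id`. Under the Riesz isomorphism `ξ ∘ A`
corresponds to `A* v = -A v`, where `v` represents `ξ`. Skewness then gives `⟪v, A v⟫ = 0` and
`‖A v‖² = -⟪A² v, v⟫ = 4(1 - p²)‖v‖²`.
-/

open scoped InnerProductSpace

open ContinuousLinearMap InnerProductSpace

theorem mul_sub_mul_mul_self_of_mul_self_eq_neg_one {R : Type*} [Ring R] {a b : R}
    (ha : a * a = -1) (hb : b * b = -1) :
    (a * b - b * a) * (a * b - b * a) = (a * b + b * a) * (a * b + b * a) - 4 := by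
  have hab : a * b * (b * a) = 1 := by
    rw [mul_assoc, ← mul_assoc b, hb]; simp [ha]
  have hba : b * a * (a * b) = 1 := by
    rw [mul_assoc, ← mul_assoc a, ha]; simp [hb]
  calc (a * b - b * a) * (a * b - b * a)
      = (a * b + b * a) * (a * b + b * a) - 2 * (a * b * (b * a) + b * a * (a * b)) := by
        noncomm_ring
    _ = _ := by rw [hab, hba]; norm_num

theorem mul_sub_mul_mul_self_of_mul_add_mul_eq_smul_one {k R : Type*} [CommRing k] [Ring R]
    [Algebra k R] {a b : R} {c : k} (ha : a * a = -1) (hb : b * b = -1)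
    (hab : a * b + b * a = c • 1) :
    (a * b - b * a) * (a * b - b * a) = (c ^ 2 - 4) • 1 := by
  rw [mul_sub_mul_mul_self_of_mul_self_eq_neg_one ha hb, hab, ← Algebra.algebraMap_eq_smul_one,
    ← Algebra.algebraMap_eq_smul_one, ← map_mul, ← map_ofNat (algebraMap k R) 4, ← map_sub,
    sq]

theorem mul_sub_mul_mem_skewAdjoint {R : Type*} [Ring R] [StarRing R] {a b : R}
    (ha : a ∈ skewAdjoint R) (hb : b ∈ skewAdjoint R) : a * b - b * a ∈ skewAdjoint R := by
  rw [skewAdjoint.mem_iff] at *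
  simp only [star_sub, star_mul, ha, hb, neg_mul_neg, neg_sub]

theorem ContinuousLinearMap.mem_skewAdjoint_of_comp_self_eq_neg_one {𝕜 E : Type*} [RCLike 𝕜]
    [NormedAddCommGroup E] [InnerProductSpace 𝕜 E] [CompleteSpace E] {K : E →L[𝕜] E}
    (hKK : K ∘L K = -1) (hK : ∀ x y, ⟪K x, K y⟫_𝕜 = ⟪x, y⟫_𝕜) :
    K ∈ skewAdjoint (E →L[𝕜] E) := by
  rw [skewAdjoint.mem_iff, star_eq_adjoint, eq_comm, eq_adjoint_iff]
  intro x y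
  rw [← hK x (K y), ← comp_apply, hKK]
  simp

theorem InnerProductSpace.toDual_symm_comp {𝕜 E : Type*} [RCLike 𝕜] [NormedAddCommGroup E]
    [InnerProductSpace 𝕜 E] [CompleteSpace E] (ξ : StrongDual 𝕜 E) (A : E →L[𝕜] E) :
    (toDual 𝕜 E).symm (ξ ∘L A) = adjoint A ((toDual 𝕜 E).symm ξ) := by
  refine ext_inner_right 𝕜 fun x => ?_
  rw [toDual_symm_apply, adjoint_inner_left, toDual_symm_apply, comp_apply]

namespace ContinuousLinearMap

variable {E : Type*} [NormedAddCommGroup E] [InnerProductSpace ℝ E] [CompleteSpace E]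
  {A : E →L[ℝ] E}

theorem inner_apply_self_eq_zero_of_mem_skewAdjoint (hA : A ∈ skewAdjoint (E →L[ℝ] E))
    (v : E) : ⟪v, A v⟫_ℝ = 0 := by
  rw [skewAdjoint.mem_iff, star_eq_adjoint] at hA
  have h := adjoint_inner_left A v v
  rw [hA, neg_apply, inner_neg_left, real_inner_comm] at h
  linarith

theorem norm_apply_sq_of_mem_skewAdjoint {s : ℝ} (hA : A ∈ skewAdjoint (E →L[ℝ] E))
    (hAA : A * A = s • 1) (v : E) : ‖A v‖ ^ 2 = -s * ‖v‖ ^ 2 := by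
  rw [skewAdjoint.mem_iff, star_eq_adjoint] at hA
  rw [← real_inner_self_eq_norm_sq, ← adjoint_inner_left, hA, neg_apply, inner_neg_left,
    ← comp_apply, ← mul_def, hAA]
  simp [real_inner_smul_left]

end ContinuousLinearMap

theorem stmt_4_general {V : Type*} [NormedAddCommGroup V] [InnerProductSpace ℝ V]
    [FiniteDimensional ℝ V]
    (I J : V →L[ℝ] V) (p : ℝ)
    (hI2 : I ∘L I = -1) (hJ2 : J ∘L J = -1)
    (hIc : ∀ x y : V, ⟪I x, I y⟫_ℝ = ⟪x, y⟫_ℝ)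
    (hJc : ∀ x y : V, ⟪J x, J y⟫_ℝ = ⟪x, y⟫_ℝ)
    (hanti : I ∘L J + J ∘L I = (2 * p) • (1 : V →L[ℝ] V))
    (ξ θ : V →L[ℝ] ℝ)
    (hθ : θ = (1 / (2 * (p ^ 2 - 1))) • (ξ.comp (I ∘L J - J ∘L I))) :
    ⟪(InnerProductSpace.toDual ℝ V).symm ξ, (InnerProductSpace.toDual ℝ V).symm θ⟫_ℝ = 0 ∧
      ‖θ‖ ^ 2 = ‖ξ‖ ^ 2 / (1 - p ^ 2) := by
  set A := I * J - J * I
  have hA : A ∈ skewAdjoint (V →L[ℝ] V) := mul_sub_mul_mem_skewAdjoint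
    (mem_skewAdjoint_of_comp_self_eq_neg_one hI2 hIc)
    (mem_skewAdjoint_of_comp_self_eq_neg_one hJ2 hJc)
  have hAA : A * A = (4 * (p ^ 2 - 1)) • 1 := by
    rw [mul_sub_mul_mul_self_of_mul_add_mul_eq_smul_one hI2 hJ2 hanti]; ring_nf
  set v := (toDual ℝ V).symm ξ
  set c : ℝ := 1 / (2 * (p ^ 2 - 1))
  have hθv : (toDual ℝ V).symm θ = -c • A v := by
    change θ = c • ξ ∘L A at hθ
    rw [hθ, LinearIsometryEquiv.map_smulₛₗ, toDual_symm_comp, ← star_eq_adjoint,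
      skewAdjoint.mem_iff.mp hA]
    simp [v]
  refine ⟨?_, ?_⟩
  · rw [hθv, real_inner_smul_right, inner_apply_self_eq_zero_of_mem_skewAdjoint hA, mul_zero]
  · have hc : c ^ 2 * (4 * (1 - p ^ 2)) = 1 / (1 - p ^ 2) := by
      -- at `p ^ 2 = 1` both sides vanish, since `1 / 0 = 0`
      by_cases hp : 1 - p ^ 2 = 0
      · simp [c, hp, show p ^ 2 - 1 = 0 by linarith]
      · have hp' : p ^ 2 - 1 ≠ 0 := fun h => hp (by linarith)
        simp only [c]
        field_simp
        ring
    rw [← ((toDual ℝ V).symm).norm_map θ, hθv, norm_smul, mul_pow, Real.norm_eq_abs, sq_abs,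
      norm_apply_sq_of_mem_skewAdjoint hA hAA, ← ((toDual ℝ V).symm).norm_map ξ]
    linear_combination ‖v‖ ^ 2 * hc

/-- For compatible complex structures `I`, `J` on a
finite-dimensional real inner product space with `I∘J + J∘I = 2p·id`,
`|p| < 1`, and a linear functional `ξ`, the functional
`θ = (1/(2(p² - 1)))·(ξ ∘ [I,J])` satisfies `⟨ξ, θ⟩ = 0` (in the inner
product induced on the dual via Riesz representation) and
`‖θ‖² = ‖ξ‖²/(1 - p²)`. -/
theorem stmt_4 {V : Type*} [NormedAddCommGroup V] [InnerProductSpace ℝ V]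
    [FiniteDimensional ℝ V]
    (I J : V →L[ℝ] V) (p : ℝ) (hp : |p| < 1)
    (hI2 : I ∘L I = -1) (hJ2 : J ∘L J = -1)
    (hIc : ∀ x y : V, ⟪I x, I y⟫_ℝ = ⟪x, y⟫_ℝ)
    (hJc : ∀ x y : V, ⟪J x, J y⟫_ℝ = ⟪x, y⟫_ℝ)
    (hanti : I ∘L J + J ∘L I = (2 * p) • (1 : V →L[ℝ] V))
    (ξ θ : V →L[ℝ] ℝ)
    (hθ : θ = (1 / (2 * (p ^ 2 - 1))) • (ξ.comp (I ∘L J - J ∘L I))) :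
    ⟪(InnerProductSpace.toDual ℝ V).symm ξ, (InnerProductSpace.toDual ℝ V).symm θ⟫_ℝ = 0 ∧
      ‖θ‖ ^ 2 = ‖ξ‖ ^ 2 / (1 - p ^ 2) :=
  stmt_4_general I J p hI2 hJ2 hIc hJc hanti ξ θ hθ
end

section
/- Let V be an oriented 4-dimensional real inner product space with volume form vol (the canonical alternating 4-form determined by the inner product and orientation), let α ∈ V, and define the trilinear alternating form H(x,y,z) := vol(α, x, y, z). Then for every orthonormal basis (e₁, e₂, e₃, e₄) of V and all x, y ∈ V, ∑_{p=1}^{4} ∑_{q=1}^{4} H(x, e_p, e_q)·H(y, e_p, e_q) = 2·(‖α‖²·⟨x, y⟩ − ⟨α, x⟩·⟨α, y⟩). -/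
open Module
open scoped InnerProductSpace

private lemma det4 (M : Matrix (Fin 4) (Fin 4) ℝ) :
    M.det =
      M 0 0 * (M 1 1 * (M 2 2 * M 3 3 - M 2 3 * M 3 2)
             - M 1 2 * (M 2 1 * M 3 3 - M 2 3 * M 3 1)
             + M 1 3 * (M 2 1 * M 3 2 - M 2 2 * M 3 1))
    - M 0 1 * (M 1 0 * (M 2 2 * M 3 3 - M 2 3 * M 3 2)
             - M 1 2 * (M 2 0 * M 3 3 - M 2 3 * M 3 0)
             + M 1 3 * (M 2 0 * M 3 2 - M 2 2 * M 3 0))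
    + M 0 2 * (M 1 0 * (M 2 1 * M 3 3 - M 2 3 * M 3 1)
             - M 1 1 * (M 2 0 * M 3 3 - M 2 3 * M 3 0)
             + M 1 3 * (M 2 0 * M 3 1 - M 2 1 * M 3 0))
    - M 0 3 * (M 1 0 * (M 2 1 * M 3 2 - M 2 2 * M 3 1)
             - M 1 1 * (M 2 0 * M 3 2 - M 2 2 * M 3 0)
             + M 1 2 * (M 2 0 * M 3 1 - M 2 1 * M 3 0)) := by
  have h1 : (Fin.succ 2 : Fin 4) = 3 := rfl
  have h5 : (Fin.castSucc 2 : Fin 4) = 2 := rfl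
  simp [Matrix.det_succ_row_zero, Fin.sum_univ_succ, Fin.succ_zero_eq_one,
    Fin.succ_one_eq_two, h1, h5, Fin.succAbove]
  ring

/-- Closed form of the determinant with columns `(a, v, eₚ, e_q)`. -/
private def Dform (p q : Fin 4) (a v : Fin 4 → ℝ) : ℝ :=
  match p, q with
  | 0, 1 => a 2 * v 3 - a 3 * v 2
  | 0, 2 => a 3 * v 1 - a 1 * v 3
  | 0, 3 => a 1 * v 2 - a 2 * v 1
  | 1, 0 => a 3 * v 2 - a 2 * v 3
  | 1, 2 => a 0 * v 3 - a 3 * v 0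
  | 1, 3 => a 2 * v 0 - a 0 * v 2
  | 2, 0 => a 1 * v 3 - a 3 * v 1
  | 2, 1 => a 3 * v 0 - a 0 * v 3
  | 2, 3 => a 0 * v 1 - a 1 * v 0
  | 3, 0 => a 2 * v 1 - a 1 * v 2
  | 3, 1 => a 0 * v 2 - a 2 * v 0
  | 3, 2 => a 1 * v 0 - a 0 * v 1
  | _, _ => 0

private lemma Dform_00 (a v : Fin 4 → ℝ) : Dform 0 0 a v = 0 := rfl
private lemma Dform_01 (a v : Fin 4 → ℝ) : Dform 0 1 a v = a 2 * v 3 - a 3 * v 2 := rfl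
private lemma Dform_02 (a v : Fin 4 → ℝ) : Dform 0 2 a v = a 3 * v 1 - a 1 * v 3 := rfl
private lemma Dform_03 (a v : Fin 4 → ℝ) : Dform 0 3 a v = a 1 * v 2 - a 2 * v 1 := rfl
private lemma Dform_10 (a v : Fin 4 → ℝ) : Dform 1 0 a v = a 3 * v 2 - a 2 * v 3 := rfl
private lemma Dform_11 (a v : Fin 4 → ℝ) : Dform 1 1 a v = 0 := rfl
private lemma Dform_12 (a v : Fin 4 → ℝ) : Dform 1 2 a v = a 0 * v 3 - a 3 * v 0 := rfl
private lemma Dform_13 (a v : Fin 4 → ℝ) : Dform 1 3 a v = a 2 * v 0 - a 0 * v 2 := rfl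
private lemma Dform_20 (a v : Fin 4 → ℝ) : Dform 2 0 a v = a 1 * v 3 - a 3 * v 1 := rfl
private lemma Dform_21 (a v : Fin 4 → ℝ) : Dform 2 1 a v = a 3 * v 0 - a 0 * v 3 := rfl
private lemma Dform_22 (a v : Fin 4 → ℝ) : Dform 2 2 a v = 0 := rfl
private lemma Dform_23 (a v : Fin 4 → ℝ) : Dform 2 3 a v = a 0 * v 1 - a 1 * v 0 := rfl
private lemma Dform_30 (a v : Fin 4 → ℝ) : Dform 3 0 a v = a 2 * v 1 - a 1 * v 2 := rfl
private lemma Dform_31 (a v : Fin 4 → ℝ) : Dform 3 1 a v = a 0 * v 2 - a 2 * v 0 := rfl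
private lemma Dform_32 (a v : Fin 4 → ℝ) : Dform 3 2 a v = a 1 * v 0 - a 0 * v 1 := rfl
private lemma Dform_33 (a v : Fin 4 → ℝ) : Dform 3 3 a v = 0 := rfl

set_option maxHeartbeats 1600000 in
/-- STMT6 -/
theorem stmt_6 {V : Type*} [NormedAddCommGroup V] [InnerProductSpace ℝ V]
    [Fact (finrank ℝ V = 4)] (o : Orientation ℝ V (Fin 4)) (α : V)
    (b : OrthonormalBasis (Fin 4) ℝ V) (x y : V) :
    ∑ p : Fin 4, ∑ q : Fin 4,
        o.volumeForm ![α, x, b p, b q] * o.volumeForm ![α, y, b p, b q] =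
      2 * (‖α‖ ^ 2 * ⟪x, y⟫_ℝ - ⟪α, x⟫_ℝ * ⟪α, y⟫_ℝ) := by
  have hvol : ∀ v w : Fin 4 → V,
      o.volumeForm v * o.volumeForm w = b.toBasis.det v * b.toBasis.det w := by
    intro v w
    by_cases hb : b.toBasis.orientation = o
    · rw [o.volumeForm_robust b hb]
    · rw [o.volumeForm_robust_neg b hb]; simp
  have hrepr : ∀ (p i : Fin 4), b.toBasis.repr (b p) i = if p = i then 1 else 0 := by
    intro p i
    simp [OrthonormalBasis.coe_toBasis_repr_apply, OrthonormalBasis.repr_self,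
      EuclideanSpace.single_apply, eq_comm]
  have key : ∀ (v : V) (p q : Fin 4),
      b.toBasis.det ![α, v, b p, b q] =
        Dform p q (fun i => b.toBasis.repr α i) (fun i => b.toBasis.repr v i) := by
    intro v p q
    have hdet : b.toBasis.det ![α, v, b p, b q] =
        Matrix.det (Matrix.of fun i j => b.toBasis.repr (![α, v, b p, b q] j) i) := by
      rw [Basis.det_apply]; rfl
    rw [hdet, det4]
    fin_cases p <;> fin_cases q <;>
      simp [Dform, hrepr, Matrix.cons_val_zero, Matrix.cons_val_one] <;> ring
  simp only [hvol, key]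
  have hx : ⟪x, y⟫_ℝ = ∑ i : Fin 4, b.repr x i * b.repr y i := by
    rw [← b.sum_inner_mul_inner x y]
    simp [b.repr_apply_apply, real_inner_comm]
  have hα : ‖α‖ ^ 2 = ∑ i : Fin 4, b.repr α i * b.repr α i := by
    have := b.sum_inner_mul_inner α α
    rw [← real_inner_self_eq_norm_sq, ← this]
    simp [b.repr_apply_apply, real_inner_comm]
  have hax : ⟪α, x⟫_ℝ = ∑ i : Fin 4, b.repr α i * b.repr x i := by
    rw [← b.sum_inner_mul_inner α x]
    simp [b.repr_apply_apply, real_inner_comm]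
  have hay : ⟪α, y⟫_ℝ = ∑ i : Fin 4, b.repr α i * b.repr y i := by
    rw [← b.sum_inner_mul_inner α y]
    simp [b.repr_apply_apply, real_inner_comm]
  rw [hx, hα, hax, hay]
  simp only [Fin.sum_univ_four, Dform_00, Dform_01, Dform_02, Dform_03, Dform_10, Dform_11, Dform_12, Dform_13, Dform_20, Dform_21, Dform_22, Dform_23, Dform_30, Dform_31, Dform_32, Dform_33, OrthonormalBasis.coe_toBasis_repr_apply]
  ring
end

section
/- Let V be a 4-dimensional real inner product space and let I, J be complex structures on V compatible with the inner product such that I ∘ J + J ∘ I = 2p·id for some real number p. Then the determinant of the commutator satisfies det([I,J]) = 16·(1 − p²)², and hence √(det [I,J]) = 4·(1 − p²). -/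
open Module
open scoped InnerProductSpace

set_option maxHeartbeats 1000000 in
lemma newton4_aux (M : Matrix (Fin 4) (Fin 4) ℝ) :
    24 * M.det = (M.trace)^4 - 6*(M.trace)^2*(M*M).trace + 3*((M*M).trace)^2
      + 8*M.trace*(M*M*M).trace - 6*(M*M*M*M).trace := by
  have hdet : M.det = M 0 0 * (M 1 1 * (M 2 2 * M 3 3 - M 2 3 * M 3 2) - M 1 2 * (M 2 1 * M 3 3 - M 2 3 * M 3 1) + M 1 3 * (M 2 1 * M 3 2 - M 2 2 * M 3 1))
      - M 0 1 * (M 1 0 * (M 2 2 * M 3 3 - M 2 3 * M 3 2) - M 1 2 * (M 2 0 * M 3 3 - M 2 3 * M 3 0) + M 1 3 * (M 2 0 * M 3 2 - M 2 2 * M 3 0))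
      + M 0 2 * (M 1 0 * (M 2 1 * M 3 3 - M 2 3 * M 3 1) - M 1 1 * (M 2 0 * M 3 3 - M 2 3 * M 3 0) + M 1 3 * (M 2 0 * M 3 1 - M 2 1 * M 3 0))
      - M 0 3 * (M 1 0 * (M 2 1 * M 3 2 - M 2 2 * M 3 1) - M 1 1 * (M 2 0 * M 3 2 - M 2 2 * M 3 0) + M 1 2 * (M 2 0 * M 3 1 - M 2 1 * M 3 0)) := by
    rw [Matrix.det_succ_row_zero]
    simp (config := { decide := true }) [Fin.sum_univ_succ, Matrix.det_fin_three,
      Matrix.submatrix, Fin.succAbove, show (Fin.succ 2 : Fin 4) = 3 from rfl,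
      show (Fin.castSucc 2 : Fin 4) = 2 from rfl, show (Fin.succ 1 : Fin 4) = 2 from rfl,
      show (Fin.castSucc 1 : Fin 4) = 1 from rfl]
    ring
  rw [hdet]
  simp [Matrix.trace, Matrix.diag, Matrix.mul_apply, Fin.sum_univ_four]
  ring

/-- For compatible complex structures `I`, `J` on a 4-dimensional
real inner product space with `I∘J + J∘I = 2p·id`, one has
`det [I,J] = 16(1 - p²)²` and `√(det [I,J]) = 4(1 - p²)`. -/
theorem stmt_7 {V : Type*} [NormedAddCommGroup V] [InnerProductSpace ℝ V]
    [FiniteDimensional ℝ V] (hdim : finrank ℝ V = 4)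
    (I J : V →ₗ[ℝ] V) (p : ℝ)
    (hI2 : I ∘ₗ I = -1) (hJ2 : J ∘ₗ J = -1)
    (hIc : ∀ x y : V, ⟪I x, I y⟫_ℝ = ⟪x, y⟫_ℝ)
    (hJc : ∀ x y : V, ⟪J x, J y⟫_ℝ = ⟪x, y⟫_ℝ)
    (hanti : I ∘ₗ J + J ∘ₗ I = (2 * p) • (1 : V →ₗ[ℝ] V)) :
    LinearMap.det (I ∘ₗ J - J ∘ₗ I) = 16 * (1 - p ^ 2) ^ 2 ∧
      Real.sqrt (LinearMap.det (I ∘ₗ J - J ∘ₗ I)) = 4 * (1 - p ^ 2) := by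
  set C : V →ₗ[ℝ] V := I ∘ₗ J - J ∘ₗ I with hC
  -- algebra: C ∘ C = (4p² - 4) • 1
  have hI2' : (I : Module.End ℝ V) * I = -1 := hI2
  have hJ2' : (J : Module.End ℝ V) * J = -1 := hJ2
  have hanti' : (I : Module.End ℝ V) * J + J * I = (2 * p) • 1 := hanti
  have hJI : (J : Module.End ℝ V) * I = (2 * p) • 1 - I * J := eq_sub_of_add_eq' hanti'
  have hA2 : ((I : Module.End ℝ V) * J) * (I * J) = (2 * p) • (I * J) - 1 := by
    have h1 : ((I : Module.End ℝ V) * J) * (I * J) = I * (J * I) * J := by noncomm_ring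
    rw [h1, hJI, mul_sub, sub_mul, mul_smul_comm, smul_mul_assoc, mul_one]
    have h2 : (I : Module.End ℝ V) * (I * J) * J = (I * I) * (J * J) := by noncomm_ring
    rw [h2, hI2', hJ2', neg_mul_neg, one_mul]
  have hC2 : (C : Module.End ℝ V) * C = (4 * p ^ 2 - 4) • 1 := by
    have hCe : (C : Module.End ℝ V) = (2:ℝ) • (I * J) - (2 * p) • 1 := by
      rw [hC]
      show (I : Module.End ℝ V) * J - J * I = _
      rw [hJI]; module
    rw [hCe]
    simp only [sub_mul, mul_sub, smul_mul_assoc, mul_smul_comm, hA2, smul_sub, smul_smul,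
      mul_one, one_mul]
    module
  -- skew-adjointness
  have hIsk : ∀ x y : V, ⟪x, I y⟫_ℝ = -⟪I x, y⟫_ℝ := by
    intro x y
    have h2 : I (I y) = -y := by
      have := congrArg (fun f => f y) hI2
      simpa using this
    rw [← hIc x (I y), h2, inner_neg_right]
  have hJsk : ∀ x y : V, ⟪x, J y⟫_ℝ = -⟪J x, y⟫_ℝ := by
    intro x y
    have h2 : J (J y) = -y := by
      have := congrArg (fun f => f y) hJ2
      simpa using this
    rw [← hJc x (J y), h2, inner_neg_right]
  have hCsk : ∀ x y : V, ⟪C x, y⟫_ℝ = -⟪x, C y⟫_ℝ := by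
    intro x y
    have e1 : ⟪(I ∘ₗ J) x, y⟫_ℝ = ⟪x, (J ∘ₗ I) y⟫_ℝ := by
      simp only [LinearMap.comp_apply]
      rw [show ⟪I (J x), y⟫_ℝ = -⟪J x, I y⟫_ℝ from by rw [hIsk]; ring_nf, hJsk]
    have e2 : ⟪(J ∘ₗ I) x, y⟫_ℝ = ⟪x, (I ∘ₗ J) y⟫_ℝ := by
      simp only [LinearMap.comp_apply]
      rw [show ⟪J (I x), y⟫_ℝ = -⟪I x, J y⟫_ℝ from by rw [hJsk]; ring_nf, hIsk]
    rw [hC]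
    simp only [LinearMap.sub_apply, inner_sub_left, inner_sub_right, e1, e2]
    ring
  -- 1 - p² ≥ 0
  have hp : 0 ≤ 1 - p ^ 2 := by
    have : Nontrivial V := Module.nontrivial_of_finrank_pos (R := ℝ) (by omega)
    obtain ⟨x, hx⟩ := exists_ne (0 : V)
    have hxpos : (0:ℝ) < ⟪x, x⟫_ℝ :=
      lt_of_le_of_ne real_inner_self_nonneg (fun h => hx (inner_self_eq_zero.mp h.symm))
    have h1 : ⟪C x, C x⟫_ℝ = (4 - 4 * p ^ 2) * ⟪x, x⟫_ℝ := by
      rw [hCsk x (C x)]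
      have : C (C x) = (4 * p ^ 2 - 4) • x := by
        have := congrArg (fun f => f x) hC2
        simpa [Module.End.mul_apply] using this
      rw [this, inner_smul_right]
      ring
    have h2 : (0:ℝ) ≤ ⟪C x, C x⟫_ℝ := real_inner_self_nonneg
    nlinarith
  -- determinant computation
  obtain ⟨b⟩ : Nonempty (Basis (Fin 4) ℝ V) := ⟨Module.finBasisOfFinrankEq ℝ V hdim⟩
  set M : Matrix (Fin 4) (Fin 4) ℝ := LinearMap.toMatrix b b C with hM
  have hdetM : M.det = LinearMap.det C := LinearMap.det_toMatrix b C
  have hMM : M * M = (4 * p ^ 2 - 4) • 1 := by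
    rw [hM, ← LinearMap.toMatrix_mul, hC2, map_smul]
    congr 1
    exact LinearMap.toMatrix_one b
  have htr : M.trace = 0 := by
    have h0 : LinearMap.trace ℝ V C = 0 := by
      rw [hC, map_sub]
      have := LinearMap.trace_mul_comm (R := ℝ) (M := V) I J
      simp only [Module.End.mul_eq_comp] at this
      rw [this, sub_self]
    rw [hM, ← LinearMap.trace_eq_matrix_trace, h0]
  have htr2 : (M * M).trace = 4 * (4 * p ^ 2 - 4) := by
    rw [hMM, Matrix.trace_smul, Matrix.trace_one]
    simp [Fintype.card_fin]
    ring
  have htr4 : (M * M * M * M).trace = 4 * (4 * p ^ 2 - 4) ^ 2 := by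
    have : M * M * M * M = ((4 * p ^ 2 - 4) ^ 2) • 1 := by
      rw [show M * M * M * M = (M * M) * (M * M) from by noncomm_ring, hMM, smul_mul_assoc,
        mul_smul_comm, smul_smul, one_mul, ← sq]
    rw [this, Matrix.trace_smul, Matrix.trace_one]
    simp [Fintype.card_fin]
    ring
  have hnewt := newton4_aux M
  rw [htr, htr2, htr4] at hnewt
  have hdet : LinearMap.det C = 16 * (1 - p ^ 2) ^ 2 := by
    rw [← hdetM]; nlinarith [hnewt]
  refine ⟨hdet, ?_⟩
  rw [hdet, show (16 : ℝ) * (1 - p ^ 2) ^ 2 = (4 * (1 - p ^ 2)) ^ 2 from by ring,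
    Real.sqrt_sq (by linarith)]
end
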